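/- Let K be a regular incidence complex of rank n ≥ 4 realized faithfully in E^3 with flag-transitive symmetry group G ≤ Isom(E^3), base flag {F₀,...,F_{n-1}}, and distinguished subgroups R_i. If the affine span of the vertex set of the 2-face F₂ is 3-dimensional (F₂ is non-planar), then R₃ = ... = R_{n-1} = R₋₁ are all equal to the flag stabilizer, contradicting that each |R_i : R₋₁| ≥ 2; hence F₂ must be planar. -/

import Mathlib

/-!
Let `Ψ` be a flag `3`-adjacent to the base flag `Φ` and `g ∈ G` an element carrying `Φ` to
`Ψ`: it fixes every face of `Φ` except `F₃`, which it moves. Because the `2`-faces are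
polygons, an automorphism fixing `F₀`, `F₁`, `F₂` fixes every face of `F₂`: walk from `Φ`
through flags containing `F₂` (strong flag-connectedness); each step replaces a vertex or an
edge by the only other face between two already fixed faces. Hence the isometry `g` fixes
the realized vertices of `F₂`, and if these affinely span `E³` then `g = 1`, so `π g` cannot
move `F₃`.
-/

universe u

variable {α : Type u}

/-- A ranked partial order `(α, ≤)` with rank function `rk` is an incidence complex of
rank `n`: ranks run from `-1` to `n` and are strictly monotone, there are unique minimal
and maximal faces, every flag (maximal chain) contains a face of each rank `-1,…,n` (hence
has exactly `n+2` faces), the complex is strongly flag-connected, and between any two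
incident faces of ranks `j-1` and `j+1` there are at least two faces of rank `j`. -/
structure IsIncidenceComplex (n : ℕ) [PartialOrder α] (rk : α → ℤ) : Prop where
  rk_strictMono : ∀ {F G : α}, F < G → rk F < rk G
  rk_range : ∀ F : α, -1 ≤ rk F ∧ rk F ≤ n
  exists_bot : ∃ B : α, rk B = -1 ∧ ∀ F : α, B ≤ F
  exists_top : ∃ T : α, rk T = n ∧ ∀ F : α, F ≤ T
  flag_rk : ∀ Φ : Set α, IsMaxChain (· ≤ ·) Φ → ∀ j : ℤ, -1 ≤ j → j ≤ n →
    ∃ F ∈ Φ, rk F = j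
  strongly_connected : ∀ Φ Ψ : Set α, IsMaxChain (· ≤ ·) Φ → IsMaxChain (· ≤ ·) Ψ →
    Relation.ReflTransGen
      (fun A B => IsMaxChain (· ≤ ·) A ∧ IsMaxChain (· ≤ ·) B ∧ Φ ∩ Ψ ⊆ A ∧ Φ ∩ Ψ ⊆ B ∧
        ∃ F G, F ∈ A ∧ G ∈ B ∧ F ≠ G ∧ A \ {F} = B \ {G}) Φ Ψ
  diamond_ge_two : ∀ F G : α, F < G → rk G = rk F + 2 →
    ∃ H₁ H₂ : α, H₁ ≠ H₂ ∧ F < H₁ ∧ H₁ < G ∧ F < H₂ ∧ H₂ < G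

/-- Two flags are `i`-adjacent when they differ in exactly one face, of rank `i`. -/
def IAdjacent [PartialOrder α] (rk : α → ℤ) (i : ℤ) (Φ Ψ : Set α) : Prop :=
  ∃ F G, F ∈ Φ ∧ G ∈ Ψ ∧ F ≠ G ∧ rk F = i ∧ rk G = i ∧ Φ \ {F} = Ψ \ {G}

/-- The group of order automorphisms of `α`, as a subgroup of the permutations of `α`. -/
def orderAutGroup (α : Type u) [PartialOrder α] : Subgroup (Equiv.Perm α) where
  carrier := {φ | ∀ a b : α, φ a ≤ φ b ↔ a ≤ b}
  one_mem' := fun _ _ => Iff.rfl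
  mul_mem' := by
    intro f g hf hg a b
    rw [Equiv.Perm.mul_apply, Equiv.Perm.mul_apply]
    exact (hf (g a) (g b)).trans (hg a b)
  inv_mem' := by
    intro f hf a b
    conv_rhs => rw [← Equiv.apply_symm_apply f a, ← Equiv.apply_symm_apply f b]
    exact (hf _ _).symm

/-- `Λ` is a flag-transitive group of automorphisms. -/
def FlagTransitive [PartialOrder α] (Λ : Subgroup (Equiv.Perm α)) : Prop :=
  ∀ Φ Ψ : Set α, IsMaxChain (· ≤ ·) Φ → IsMaxChain (· ≤ ·) Ψ → ∃ γ ∈ Λ, γ '' Φ = Ψ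

/-- The elementwise stabilizer in `Λ` of a set `Ω` of faces. -/
def stabOf [PartialOrder α] (Λ : Subgroup (Equiv.Perm α)) (Ω : Set α) :
    Subgroup (Equiv.Perm α) where
  carrier := {γ | γ ∈ Λ ∧ ∀ x ∈ Ω, γ x = x}
  one_mem' := ⟨Λ.one_mem, fun _ _ => rfl⟩
  mul_mem' := by
    intro f g hf hg
    refine ⟨Λ.mul_mem hf.1 hg.1, fun x hx => ?_⟩
    rw [Equiv.Perm.mul_apply, hg.2 x hx, hf.2 x hx]
  inv_mem' := by
    intro f hf
    refine ⟨Λ.inv_mem hf.1, fun x hx => ?_⟩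
    simpa using (congrArg (⇑f⁻¹) (hf.2 x hx)).symm

/-- The distinguished subgroup `R_i` of `Λ` relative to a base flag enumerated by
`F : Fin n → α`: the elements of `Λ` fixing every base face `F j` with `j ≠ i`.  For
`i ∉ {0,…,n-1}` (e.g. `i = -1` or `i = n`) this is the stabilizer of the base flag. -/
def distinguishedSubgroup [PartialOrder α] {n : ℕ} (Λ : Subgroup (Equiv.Perm α))
    (F : Fin n → α) (i : ℤ) : Subgroup (Equiv.Perm α) :=
  stabOf Λ {x | ∃ j : Fin n, (j : ℤ) ≠ i ∧ x = F j}

abbrev E3 := EuclideanSpace ℝ (Fin 3)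

theorem OrderIso.apply_eq_self_of_between {β : Type*} [Preorder β] (e : β ≃o β)
    {a c x z H₁ H₂ : β} (hbetween : ∀ H, (a < H ∧ H < c) ↔ (H = H₁ ∨ H = H₂))
    (ha : e a = a) (hc : e c = c) (hx : e x = x)
    (hxb : a < x ∧ x < c) (hzb : a < z ∧ z < c) (hxz : x ≠ z) : e z = z := by
  have hez : a < e z ∧ e z < c := by
    rw [← ha, ← hc]
    exact ⟨e.lt_iff_lt.2 hzb.1, e.lt_iff_lt.2 hzb.2⟩
  have hzx : e z ≠ x := fun hzx => hxz (e.injective (hx.trans hzx.symm))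
  have := (hbetween _).1 hez
  have := (hbetween _).1 hxb
  have := (hbetween _).1 hzb
  grind

theorem IsometryEquiv.eq_refl_of_affineSpan_eq_top {V P : Type*} [NormedAddCommGroup V]
    [NormedSpace ℝ V] [MetricSpace P] [NormedAddTorsor V P] {f : P ≃ᵢ P} {s : Set P}
    (hs : affineSpan ℝ s = ⊤) (hf : ∀ p ∈ s, f p = p) : f = IsometryEquiv.refl P := by
  have := AffineMap.ext_on (f := f.toRealAffineIsometryEquiv.toAffineEquiv.toAffineMap)
    (g := AffineMap.id ℝ P) hs hf
  ext x
  exact congrArg (· x) this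

namespace IsIncidenceComplex

variable [PartialOrder α] {n : ℕ} {rk : α → ℤ}

theorem rk_mono (h : IsIncidenceComplex n rk) {x y : α} (hxy : x ≤ y) : rk x ≤ rk y := by
  rcases hxy.lt_or_eq with hlt | rfl
  · exact (h.rk_strictMono hlt).le
  · exact le_rfl

theorem eq_of_rk_eq_neg_one (h : IsIncidenceComplex n rk) {x y : α} (hx : rk x = -1)
    (hy : rk y = -1) : x = y := by
  obtain ⟨B, -, hB⟩ := h.exists_bot
  have hbot : ∀ z, rk z = -1 → B = z := fun z hz =>
    (hB z).eq_of_not_lt fun hlt => by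
      have := h.rk_strictMono hlt
      have := (h.rk_range B).1
      omega
  exact (hbot x hx).symm.trans (hbot y hy)

theorem eq_of_mem_chain (h : IsIncidenceComplex n rk) {C : Set α} (hC : IsChain (· ≤ ·) C)
    {x y : α} (hx : x ∈ C) (hy : y ∈ C) (hr : rk x = rk y) : x = y := by
  by_contra hne
  rcases hC hx hy hne with hle | hle
  · exact (h.rk_strictMono (lt_of_le_of_ne hle hne)).ne hr
  · exact (h.rk_strictMono (lt_of_le_of_ne hle (Ne.symm hne))).ne hr.symm

theorem lt_of_mem_chain (h : IsIncidenceComplex n rk) {C : Set α} (hC : IsChain (· ≤ ·) C)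
    {x y : α} (hx : x ∈ C) (hy : y ∈ C) (hr : rk x < rk y) : x < y := by
  rcases hC.total hx hy with hle | hle
  · exact hle.lt_of_ne (by rintro rfl; exact hr.ne rfl)
  · exact absurd (h.rk_mono hle) (not_le.2 hr)

theorem le_of_mem_chain (h : IsIncidenceComplex n rk) {C : Set α} (hC : IsChain (· ≤ ·) C)
    {x y : α} (hx : x ∈ C) (hy : y ∈ C) (hr : rk x ≤ rk y) : x ≤ y := by
  rcases hr.lt_or_eq with hlt | heq
  · exact (h.lt_of_mem_chain hC hx hy hlt).le
  · exact (h.eq_of_mem_chain hC hx hy heq).le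

theorem isMaxChain_of_forall_rk (h : IsIncidenceComplex n rk) {C : Set α}
    (hC : IsChain (· ≤ ·) C) (hall : ∀ j : ℤ, -1 ≤ j → j ≤ n → ∃ x ∈ C, rk x = j) :
    IsMaxChain (· ≤ ·) C := by
  refine ⟨hC, fun D hD hCD => hCD.antisymm fun z hz => ?_⟩
  obtain ⟨y, hyC, hyr⟩ := hall (rk z) (h.rk_range z).1 (h.rk_range z).2
  exact h.eq_of_mem_chain hD hz (hCD hyC) hyr.symm ▸ hyC

theorem exists_lt_of_rk_lt (h : IsIncidenceComplex n rk) (x : α) {j : ℤ} (hj : -1 ≤ j)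
    (hjx : j < rk x) : ∃ w, w < x ∧ rk w = j := by
  obtain ⟨C, hC, hxC⟩ := (Set.subsingleton_singleton (a := x)).isChain.exists_maxChain
  obtain ⟨w, hwC, rfl⟩ := h.flag_rk C hC j hj (hjx.le.trans (h.rk_range x).2)
  exact ⟨w, h.lt_of_mem_chain hC.isChain hwC (hxC rfl) hjx, rfl⟩

theorem rk_apply_le (h : IsIncidenceComplex n rk) (e : α ≃o α) (x : α) :
    rk (e x) ≤ rk x := by
  by_contra! hlt
  obtain ⟨w, hw, hwr⟩ := h.exists_lt_of_rk_lt (e x) (h.rk_range x).1 hlt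
  have hlt' : rk (e.symm w) < rk x :=
    h.rk_strictMono (by simpa using e.symm.strictMono hw)
  have := h.rk_apply_le e (e.symm w)
  rw [e.apply_symm_apply] at this
  omega
termination_by (rk x + 1).toNat
decreasing_by have := (h.rk_range (e.symm w)).1; omega

theorem rk_apply (h : IsIncidenceComplex n rk) (e : α ≃o α) (x : α) : rk (e x) = rk x :=
  (h.rk_apply_le e x).antisymm (by simpa using h.rk_apply_le e.symm (e x))

theorem exists_iAdjacent (h : IsIncidenceComplex n rk) {Φ : Set α}
    (hΦ : IsMaxChain (· ≤ ·) Φ) {i : ℤ} (hi : 0 ≤ i) (hin : i < n) :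
    ∃ Ψ, IsMaxChain (· ≤ ·) Ψ ∧ IAdjacent rk i Φ Ψ := by
  obtain ⟨a, haΦ, har⟩ := h.flag_rk Φ hΦ (i - 1) (by omega) (by omega)
  obtain ⟨b, hbΦ, hbr⟩ := h.flag_rk Φ hΦ i (by omega) (by omega)
  obtain ⟨c, hcΦ, hcr⟩ := h.flag_rk Φ hΦ (i + 1) (by omega) (by omega)
  obtain ⟨H₁, H₂, hH, haH₁, hH₁c, haH₂, hH₂c⟩ :=
    h.diamond_ge_two a c (h.lt_of_mem_chain hΦ.isChain haΦ hcΦ (by omega)) (by omega)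
  obtain ⟨H, haH, hHc, hHb⟩ : ∃ H, a < H ∧ H < c ∧ H ≠ b := by
    rcases eq_or_ne H₁ b with rfl | hH₁b
    · exact ⟨H₂, haH₂, hH₂c, hH.symm⟩
    · exact ⟨H₁, haH₁, hH₁c, hH₁b⟩
  have hHr : rk H = i := by
    have := h.rk_strictMono haH
    have := h.rk_strictMono hHc
    omega
  have hHΦ : H ∉ Φ \ {b} := fun hHΦ =>
    hHΦ.2 (h.eq_of_mem_chain hΦ.isChain hHΦ.1 hbΦ (by omega))
  have hchain : IsChain (· ≤ ·) (insert H (Φ \ {b})) := by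
    refine (hΦ.isChain.mono Set.sdiff_subset).insert fun y ⟨hyΦ, hyb⟩ _ => ?_
    have hyr : rk y ≠ i := fun hyr =>
      hyb (h.eq_of_mem_chain hΦ.isChain hyΦ hbΦ (by omega))
    rcases lt_or_gt_of_ne hyr with hlt | hgt
    · exact Or.inr ((h.le_of_mem_chain hΦ.isChain hyΦ haΦ (by omega)).trans haH.le)
    · exact Or.inl (hHc.le.trans (h.le_of_mem_chain hΦ.isChain hcΦ hyΦ (by omega)))
  refine ⟨_, h.isMaxChain_of_forall_rk hchain fun j hj hjn => ?_,
    b, H, hbΦ, Set.mem_insert _ _, hHb.symm, hbr, hHr, (Set.insert_sdiff_self_of_notMem hHΦ).symm⟩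
  rcases eq_or_ne j i with rfl | hji
  · exact ⟨H, Set.mem_insert _ _, hHr⟩
  · obtain ⟨x, hxΦ, rfl⟩ := h.flag_rk Φ hΦ j hj hjn
    exact ⟨x, Or.inr ⟨hxΦ, fun hxb => hji (by rw [show x = b from hxb, hbr])⟩, rfl⟩

theorem apply_eq_self_of_iAdjacent (h : IsIncidenceComplex n rk) (e : α ≃o α)
    {i : ℤ} {Φ Ψ : Set α} (hΦ : IsChain (· ≤ ·) Φ) (hadj : IAdjacent rk i Φ Ψ)
    (he : e '' Φ = Ψ) {x : α} (hx : x ∈ Φ) (hxi : rk x ≠ i) : e x = x := by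
  obtain ⟨F, G, -, -, -, -, hGr, hdiff⟩ := hadj
  have hexΨ : e x ∈ Ψ \ {G} :=
    ⟨he ▸ Set.mem_image_of_mem e hx, fun hxG => hxi (by rw [← h.rk_apply e x, hxG, hGr])⟩
  rw [← hdiff] at hexΨ
  exact h.eq_of_mem_chain hΦ hexΨ.1 hx (h.rk_apply e x)

theorem exists_apply_ne_of_iAdjacent (h : IsIncidenceComplex n rk) (e : α ≃o α)
    {i : ℤ} {Φ Ψ : Set α} (hΨ : IsChain (· ≤ ·) Ψ) (hadj : IAdjacent rk i Φ Ψ)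
    (he : e '' Φ = Ψ) : ∃ x ∈ Φ, e x ≠ x := by
  obtain ⟨F, G, hFΦ, hGΨ, hFG, hFr, hGr, -⟩ := hadj
  refine ⟨F, hFΦ, fun heF => hFG ?_⟩
  rw [← heF]
  exact h.eq_of_mem_chain hΨ (he ▸ Set.mem_image_of_mem e hFΦ) hGΨ
    (by rw [h.rk_apply, hFr, hGr])

section Polygonal

variable (hpoly0 : ∀ F G : α, F < G → rk F = -1 → rk G = 1 →
      ∃ H₁ H₂ : α, H₁ ≠ H₂ ∧ ∀ H : α, (F < H ∧ H < G) ↔ (H = H₁ ∨ H = H₂))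
    (hpoly1 : ∀ F G : α, F < G → rk F = 0 → rk G = 2 →
      ∃ H₁ H₂ : α, H₁ ≠ H₂ ∧ ∀ H : α, (F < H ∧ H < G) ↔ (H = H₁ ∨ H = H₂))
include hpoly0 hpoly1

theorem apply_eq_self_of_flip (h : IsIncidenceComplex n rk) (e : α ≃o α) {A A' : Set α}
    (hA : IsMaxChain (· ≤ ·) A) (hA' : IsMaxChain (· ≤ ·) A') {z : α} (hsub : A' \ {z} ⊆ A)
    {F₂ : α} (hF₂A : F₂ ∈ A) (hF₂A' : F₂ ∈ A') (hF₂ : rk F₂ = 2)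
    (hfix : ∀ y ∈ A, rk y ≤ 2 → e y = y) : ∀ y ∈ A', rk y ≤ 2 → e y = y := by
  -- A new face `z` of rank `0` or `1` lies between two faces of `A`, next to exactly one
  -- other face there: the face of `A` that it replaces.
  intro y hyA' hy2
  by_cases hyA : y ∈ A
  · exact hfix y hyA hy2
  obtain rfl : y = z := by_contra fun hyz => hyA (hsub ⟨hyA', hyz⟩)
  have hrange : rk y = 0 ∨ rk y = 1 := by
    obtain ⟨b, hbA, hbr⟩ := h.flag_rk A hA (-1) le_rfl (by omega)
    have := (h.rk_range y).1
    have hy_ne_neg : rk y ≠ -1 := fun hyr => hyA (h.eq_of_rk_eq_neg_one hbr hyr ▸ hbA)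
    have hy_ne_two : rk y ≠ 2 := fun hyr =>
      hyA (h.eq_of_mem_chain hA'.isChain hF₂A' hyA' (by omega) ▸ hF₂A)
    omega
  have := (h.rk_range F₂).2
  obtain ⟨x, hxA, hxr⟩ := h.flag_rk A hA (rk y) (by omega) (by omega)
  obtain ⟨a, haA', har⟩ := h.flag_rk A' hA' (rk y - 1) (by omega) (by omega)
  obtain ⟨c, hcA', hcr⟩ := h.flag_rk A' hA' (rk y + 1) (by omega) (by omega)
  have haA : a ∈ A := hsub ⟨haA', by rintro rfl; omega⟩
  have hcA : c ∈ A := hsub ⟨hcA', by rintro rfl; omega⟩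
  have hac : a < c := h.lt_of_mem_chain hA.isChain haA hcA (by omega)
  obtain ⟨H₁, H₂, -, hbetween⟩ :
      ∃ H₁ H₂ : α, H₁ ≠ H₂ ∧ ∀ H, (a < H ∧ H < c) ↔ (H = H₁ ∨ H = H₂) := by
    rcases hrange with hr | hr
    · exact hpoly0 a c hac (by omega) (by omega)
    · exact hpoly1 a c hac (by omega) (by omega)
  exact e.apply_eq_self_of_between hbetween (hfix a haA (by omega)) (hfix c hcA (by omega))
    (hfix x hxA (by omega))
    ⟨h.lt_of_mem_chain hA.isChain haA hxA (by omega),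
      h.lt_of_mem_chain hA.isChain hxA hcA (by omega)⟩
    ⟨h.lt_of_mem_chain hA'.isChain haA' hyA' (by omega),
      h.lt_of_mem_chain hA'.isChain hyA' hcA' (by omega)⟩
    (by rintro rfl; exact hyA hxA)

theorem apply_eq_self_of_le (h : IsIncidenceComplex n rk) (e : α ≃o α) {Φ : Set α}
    (hΦ : IsMaxChain (· ≤ ·) Φ) {F₂ : α} (hF₂Φ : F₂ ∈ Φ) (hF₂ : rk F₂ = 2)
    (hfix : ∀ x ∈ Φ, rk x ≤ 2 → e x = x) {v : α} (hv : v ≤ F₂) : e v = v := by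
  obtain ⟨Ψ, hΨ, hvΨ⟩ := (IsChain.pair hv).exists_maxChain
  have hpath := h.strongly_connected Φ Ψ hΦ hΨ
  have hF₂S : F₂ ∈ Φ ∩ Ψ := ⟨hF₂Φ, hvΨ (by simp)⟩
  generalize Φ ∩ Ψ = S at hpath hF₂S
  have hfixΨ : ∀ y ∈ Ψ, rk y ≤ 2 → e y = y := by
    refine hpath.rec (motive := fun A _ => ∀ y ∈ A, rk y ≤ 2 → e y = y) hfix ?_
    intro A A' _ hstep ih
    obtain ⟨hA, hA', hSA, hSA', x, z, -, -, -, hdiff⟩ := hstep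
    exact h.apply_eq_self_of_flip hpoly0 hpoly1 e hA hA' (hdiff ▸ Set.sdiff_subset)
      (hSA hF₂S) (hSA' hF₂S) hF₂ ih
  exact hfixΨ v (hvΨ (by simp)) (hF₂ ▸ h.rk_mono hv)

end Polygonal

end IsIncidenceComplex

/-- Let `K` be an incidence complex of rank `n ≥ 4` that is a polygonal
complex (each edge has exactly two vertices and the diamond condition holds at rank 1, so
all 2-faces are polygons; faces are determined by their vertex sets), realized faithfully
in `E³` via a vertex map `β`, with a flag-transitive group `G` of isometries of `E³`
acting by automorphisms.  If the 2-face `F₂` of the base flag were non-planar—its vertex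
set affinely spanning all of `E³`—then every `R i` for `i ≥ 3` would collapse to the flag
stabilizer `R (-1)`, contradicting `|R i : R (-1)| ≥ 2`.  Hence the affine span of the
vertex set of `F₂` is not all of `E³`: the base 2-face is planar. -/
theorem base_two_face_planar_of_regular_realization
    {α : Type u} [PartialOrder α] {n : ℕ} (hn : 4 ≤ n) (rk : α → ℤ)
    (h : IsIncidenceComplex n rk)
    (hpoly0 : ∀ F G : α, F < G → rk F = -1 → rk G = 1 →
      ∃ H₁ H₂ : α, H₁ ≠ H₂ ∧ ∀ H : α, (F < H ∧ H < G) ↔ (H = H₁ ∨ H = H₂))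
    (hpoly1 : ∀ F G : α, F < G → rk F = 0 → rk G = 2 →
      ∃ H₁ H₂ : α, H₁ ≠ H₂ ∧ ∀ H : α, (F < H ∧ H < G) ↔ (H = H₁ ∨ H = H₂))
    (β : α → E3)
    (G : Subgroup (E3 ≃ᵢ E3)) (π : G →* Equiv.Perm α)
    (hπaut : ∀ g : G, π g ∈ orderAutGroup α)
    (hcompat : ∀ (g : G) (v : α), rk v = 0 → β (π g v) = (g : E3 ≃ᵢ E3) (β v))
    (htrans : ∀ Φ Ψ : Set α, IsMaxChain (· ≤ ·) Φ → IsMaxChain (· ≤ ·) Ψ →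
      ∃ g : G, (π g) '' Φ = Ψ)
    (Φ : Set α) (hΦ : IsMaxChain (· ≤ ·) Φ)
    (F : Fin n → α) (hF : ∀ i : Fin n, F i ∈ Φ ∧ rk (F i) = (i : ℤ)) :
    affineSpan ℝ (β '' {v : α | rk v = 0 ∧ v ≤ F ⟨2, by omega⟩}) ≠ ⊤ := by
  intro hspan
  obtain ⟨Ψ, hΨ, hadj⟩ := h.exists_iAdjacent hΦ (i := 3) (by omega) (by omega)
  obtain ⟨g, hg⟩ := htrans Φ Ψ hΦ hΨ
  let e : α ≃o α := ⟨π g, hπaut g _ _⟩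
  obtain ⟨hF₂Φ, hF₂⟩ := hF ⟨2, by omega⟩
  have hfaces : ∀ v, v ≤ F ⟨2, by omega⟩ → e v = v :=
    fun v hv => h.apply_eq_self_of_le hpoly0 hpoly1 e hΦ hF₂Φ hF₂
      (fun x hx hx2 => h.apply_eq_self_of_iAdjacent e hΦ.isChain hadj hg hx (by omega)) hv
  have hg1 : (g : E3 ≃ᵢ E3) = IsometryEquiv.refl E3 :=
    IsometryEquiv.eq_refl_of_affineSpan_eq_top hspan fun _ ⟨v, ⟨hv0, hv⟩, hp⟩ => by
      rw [← hp, ← hcompat g v hv0]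
      exact congrArg β (hfaces v hv)
  obtain ⟨x, -, hx⟩ := h.exists_apply_ne_of_iAdjacent e hΨ.isChain hadj hg
  exact hx (by simp [e, show g = 1 from Subtype.ext hg1])
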